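/- arXiv:1708.09277 — 3 statements merged into one kernel-verified Lean document; each statement's English description precedes it below -/
import Mathlib

section
/- For the open region D = {(x,y) : 0 < x < y < 1} in ℝ², the double integral ∫∫_D (1/(1−x)) · (1/y) dx dy equals ζ(2) = π²/6. -/
open MeasureTheory Real

/-! Expanding `1 / (1 - x) = ∑ xⁿ`, Tonelli turns the integral into `∑ₙ ∫₀¹ ∫₀ʸ xⁿ / y dx dy`,
and the inner integrals give `∫₀¹ yⁿ / (n + 1) dy = 1 / (n + 1)²`, whose sum is `ζ(2) = π² / 6`.
For nonnegative integrands (lower Lebesgue integrals) neither step needs integrability. -/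

open Set ENNReal

def openTriangle (a b : ℝ) : Set (ℝ × ℝ) := {p | a < p.1 ∧ p.1 < p.2 ∧ p.2 < b}

theorem measurableSet_openTriangle (a b : ℝ) : MeasurableSet (openTriangle a b) :=
  (measurableSet_lt measurable_const measurable_fst).inter
    ((measurableSet_lt measurable_fst measurable_snd).inter
      (measurableSet_lt measurable_snd measurable_const))

theorem lintegral_indicator_openTriangle (μ : Measure ℝ) (a b : ℝ) (f : ℝ × ℝ → ℝ≥0∞) (y : ℝ) :
    ∫⁻ x, (openTriangle a b).indicator f (x, y) ∂μ =
      (Ioo a b).indicator (fun y ↦ ∫⁻ x in Ioo a y, f (x, y) ∂μ) y := by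
  by_cases hy : y ∈ Ioo a b
  · rw [indicator_of_mem hy, ← lintegral_indicator measurableSet_Ioo]
    congr 1 with x
    simp only [indicator, openTriangle, mem_ofPred_eq, mem_Ioo, hy.2, and_true]
  · rw [indicator_of_notMem hy, ← lintegral_zero]
    congr 1 with x
    exact indicator_of_notMem (fun hx ↦ hy ⟨hx.1.trans hx.2.1, hx.2.2⟩) f

theorem setLIntegral_openTriangle {μ ν : Measure ℝ} [SFinite μ] [SFinite ν] {f : ℝ × ℝ → ℝ≥0∞}
    (hf : Measurable f) (a b : ℝ) :
    ∫⁻ p in openTriangle a b, f p ∂μ.prod ν = ∫⁻ y in Ioo a b, ∫⁻ x in Ioo a y, f (x, y) ∂μ ∂ν := by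
  rw [← lintegral_indicator (measurableSet_openTriangle a b),
    lintegral_prod_symm' _ (hf.indicator (measurableSet_openTriangle a b)),
    ← lintegral_indicator measurableSet_Ioo]
  exact lintegral_congr fun y ↦ lintegral_indicator_openTriangle μ a b f y

theorem ofReal_one_div_one_sub_eq_tsum_pow {x : ℝ} (hx₀ : 0 ≤ x) (hx₁ : x < 1) :
    ENNReal.ofReal (1 / (1 - x)) = ∑' n : ℕ, ENNReal.ofReal (x ^ n) := by
  simp_rw [ofReal_pow hx₀, ENNReal.tsum_geometric, one_div,
    ofReal_inv_of_pos (sub_pos.2 hx₁), ofReal_sub 1 hx₀, ofReal_one]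

theorem lintegral_Ioo_zero_ofReal_pow {y : ℝ} (hy : 0 ≤ y) (n : ℕ) :
    ∫⁻ x in Ioo 0 y, ENNReal.ofReal (x ^ n) = ENNReal.ofReal (y ^ (n + 1) / (n + 1)) := by
  rw [← ofReal_integral_eq_lintegral_ofReal, ← integral_Ioc_eq_integral_Ioo,
    ← intervalIntegral.integral_of_le hy, integral_pow, zero_pow n.succ_ne_zero, sub_zero]
  · exact (continuous_pow n).integrableOn_Icc.mono_set Ioo_subset_Icc_self
  · filter_upwards [ae_restrict_mem measurableSet_Ioo] with x hx
    exact pow_nonneg hx.1.le n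

theorem setLIntegral_openTriangle_pow_mul_one_div (n : ℕ) :
    ∫⁻ p in openTriangle 0 1, ENNReal.ofReal (p.1 ^ n) * ENNReal.ofReal (1 / p.2) =
      ENNReal.ofReal (1 / ((n : ℝ) + 1) ^ 2) := by
  have hinner : ∀ y ∈ Ioo (0 : ℝ) 1,
      ∫⁻ x in Ioo 0 y, ENNReal.ofReal (x ^ n) * ENNReal.ofReal (1 / y) =
        ENNReal.ofReal (y ^ n) * ENNReal.ofReal (1 / (n + 1)) := fun y ⟨hy₀, _⟩ ↦ by
    rw [lintegral_mul_const _ (by fun_prop), lintegral_Ioo_zero_ofReal_pow hy₀.le,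
      ← ofReal_mul (by positivity), ← ofReal_mul (by positivity)]
    congr 1
    field_simp
    ring
  rw [Measure.volume_eq_prod, setLIntegral_openTriangle (by fun_prop),
    setLIntegral_congr_fun measurableSet_Ioo hinner, lintegral_mul_const _ (by fun_prop),
    lintegral_Ioo_zero_ofReal_pow zero_le_one, ← ofReal_mul (by positivity)]
  congr 1
  rw [one_pow]
  field_simp

theorem hasSum_one_div_nat_add_one_sq :
    HasSum (fun n : ℕ ↦ 1 / ((n : ℝ) + 1) ^ 2) (π ^ 2 / 6) := by
  simpa using (hasSum_nat_add_iff' 1).2 hasSum_zeta_two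

theorem setLIntegral_openTriangle_eq_ofReal :
    ∫⁻ p in openTriangle 0 1, ENNReal.ofReal (1 / (1 - p.1) * (1 / p.2)) =
      ENNReal.ofReal (π ^ 2 / 6) := calc
  _ = ∫⁻ p in openTriangle 0 1, ∑' n : ℕ, ENNReal.ofReal (p.1 ^ n) * ENNReal.ofReal (1 / p.2) :=
    setLIntegral_congr_fun (measurableSet_openTriangle 0 1) fun p ⟨hx₀, hxy, hy₁⟩ ↦ by
      rw [ofReal_mul (one_div_nonneg.2 (by linarith)),
        ofReal_one_div_one_sub_eq_tsum_pow hx₀.le (hxy.trans hy₁), ENNReal.tsum_mul_right]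
  _ = ∑' n : ℕ, ENNReal.ofReal (1 / ((n : ℝ) + 1) ^ 2) := by
    rw [lintegral_tsum fun n ↦ by fun_prop]
    simp_rw [setLIntegral_openTriangle_pow_mul_one_div]
  _ = ENNReal.ofReal (π ^ 2 / 6) := by
    rw [← ofReal_tsum_of_nonneg (fun n ↦ by positivity) hasSum_one_div_nat_add_one_sq.summable,
      hasSum_one_div_nat_add_one_sq.tsum_eq]

theorem triangle_integral_eq_zeta_two :
    (∫ p in {p : ℝ × ℝ | 0 < p.1 ∧ p.1 < p.2 ∧ p.2 < 1},
      (1 / (1 - p.1)) * (1 / p.2)) = π ^ 2 / 6 ∧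
    riemannZeta 2 = (π : ℂ) ^ 2 / 6 := by
  refine ⟨?_, riemannZeta_two⟩
  have hnonneg : 0 ≤ᵐ[volume.restrict (openTriangle 0 1)]
      fun p : ℝ × ℝ ↦ 1 / (1 - p.1) * (1 / p.2) := by
    filter_upwards [ae_restrict_mem (measurableSet_openTriangle 0 1)] with p ⟨hx₀, hxy, hy₁⟩
    exact mul_nonneg (one_div_nonneg.2 (by linarith)) (one_div_nonneg.2 (by linarith))
  change ∫ p in openTriangle 0 1, _ = _
  rw [integral_eq_lintegral_of_nonneg_ae hnonneg (by fun_prop),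
    setLIntegral_openTriangle_eq_ofReal, toReal_ofReal (by positivity)]
end

section
/- The double improper integral ∫_0^1 ∫_0^1 1/((1 − xy)·√(xy)) dx dy equals π²/2. -/
/-!
On the open unit square `0 < xy < 1`, so `1 / ((1 - xy) √(xy)) = ∑ₙ (xy)^(n - 1/2)`. All terms are
nonnegative and `∫∫ (xy)^(n - 1/2) = (n + 1/2)⁻²`, so the integral is
`∑ₙ (n + 1/2)⁻² = 4 ∑ₙ (2n + 1)⁻² = 4 · (3/4) ζ(2) = π² / 2`.
-/

open MeasureTheory Real Set

theorem hasSum_one_div_two_mul_add_one_sq :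
    HasSum (fun n : ℕ => 1 / (2 * (n : ℝ) + 1) ^ 2) (π ^ 2 / 8) := by
  have h_even : HasSum (fun k : ℕ => 1 / ((2 * k : ℕ) : ℝ) ^ 2) (π ^ 2 / 24) := by
    have h : HasSum (fun k : ℕ => 1 / 4 * (1 / (k : ℝ) ^ 2)) (1 / 4 * (π ^ 2 / 6)) :=
      hasSum_zeta_two.mul_left _
    convert h using 2 with k
    · push_cast; ring
    · ring
  have h_odd : Summable (fun k : ℕ => 1 / ((2 * k + 1 : ℕ) : ℝ) ^ 2) :=
    hasSum_zeta_two.summable.comp_injective fun a b hab => by simpa using hab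
  have h_total := (HasSum.even_add_odd (f := fun n : ℕ => 1 / (n : ℝ) ^ 2) h_even
    h_odd.hasSum).unique hasSum_zeta_two
  convert h_odd.hasSum using 1
  · push_cast; rfl
  · linarith

theorem hasSum_one_div_nat_add_half_sq :
    HasSum (fun n : ℕ => 1 / ((n : ℝ) + 1 / 2) ^ 2) (π ^ 2 / 2) := by
  have h : HasSum (fun n : ℕ => 4 * (1 / (2 * (n : ℝ) + 1) ^ 2)) (4 * (π ^ 2 / 8)) :=
    hasSum_one_div_two_mul_add_one_sq.mul_left _
  convert h using 2 with n
  · field_simp; ring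
  · ring

theorem hasSum_rpow_nat_sub {t : ℝ} (a : ℝ) (ht₀ : 0 < t) (ht₁ : t < 1) :
    HasSum (fun n : ℕ => t ^ ((n : ℝ) - a)) (1 / ((1 - t) * t ^ a)) := by
  have h : HasSum (fun n : ℕ => t ^ n * (t ^ a)⁻¹) ((1 - t)⁻¹ * (t ^ a)⁻¹) :=
    (hasSum_geometric_of_lt_one ht₀.le ht₁).mul_right _
  convert h using 2 with n
  · rw [rpow_sub ht₀, rpow_natCast, div_eq_mul_inv]
  · rw [one_div, mul_inv]

theorem integral_rpow_Ioo_zero_one {r : ℝ} (hr : -1 < r) :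
    ∫ x in Ioo (0 : ℝ) 1, x ^ r = (r + 1)⁻¹ := by
  rw [← integral_Ioc_eq_integral_Ioo, ← intervalIntegral.integral_of_le zero_le_one,
    integral_rpow (Or.inl hr), one_rpow, zero_rpow (by linarith), sub_zero, one_div]

theorem mul_rpow_eqOn_Ioo_prod_Ioo (r : ℝ) :
    EqOn (fun p : ℝ × ℝ => (p.1 * p.2) ^ r) (fun p => p.1 ^ r * p.2 ^ r)
      (Ioo (0 : ℝ) 1 ×ˢ Ioo (0 : ℝ) 1) :=
  fun _ hp => mul_rpow hp.1.1.le hp.2.1.le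

theorem integrableOn_mul_rpow_Ioo_prod_Ioo {r : ℝ} (hr : -1 < r) :
    IntegrableOn (fun p : ℝ × ℝ => (p.1 * p.2) ^ r) (Ioo (0 : ℝ) 1 ×ˢ Ioo (0 : ℝ) 1) := by
  have h₁ : IntegrableOn (fun x : ℝ => x ^ r) (Ioo 0 1) :=
    (intervalIntegral.integrableOn_Ioo_rpow_iff one_pos).2 hr
  refine IntegrableOn.congr_fun ?_ (mul_rpow_eqOn_Ioo_prod_Ioo r).symm
    (measurableSet_Ioo.prod measurableSet_Ioo)
  rw [IntegrableOn, Measure.volume_eq_prod, ← Measure.prod_restrict]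
  exact h₁.mul_prod h₁

theorem integral_mul_rpow_Ioo_prod_Ioo {r : ℝ} (hr : -1 < r) :
    ∫ p in Ioo (0 : ℝ) 1 ×ˢ Ioo (0 : ℝ) 1, (p.1 * p.2) ^ r = (r + 1)⁻¹ ^ 2 := by
  rw [setIntegral_congr_fun (measurableSet_Ioo.prod measurableSet_Ioo)
    (mul_rpow_eqOn_Ioo_prod_Ioo r), Measure.volume_eq_prod,
    setIntegral_prod_mul (fun x : ℝ => x ^ r) (fun x : ℝ => x ^ r),
    integral_rpow_Ioo_zero_one hr, sq]

theorem unit_square_integral :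
    ∫ p in (Set.Ioo (0 : ℝ) 1) ×ˢ (Set.Ioo (0 : ℝ) 1),
      1 / ((1 - p.1 * p.2) * Real.sqrt (p.1 * p.2)) = π ^ 2 / 2 := by
  set S := Ioo (0 : ℝ) 1 ×ˢ Ioo (0 : ℝ) 1
  have hS : MeasurableSet S := measurableSet_Ioo.prod measurableSet_Ioo
  have hexp (n : ℕ) : -1 < (n : ℝ) - 1 / 2 := by linarith [n.cast_nonneg (α := ℝ)]
  have hint (n : ℕ) : ∫ p in S, (p.1 * p.2) ^ ((n : ℝ) - 1 / 2) = 1 / ((n : ℝ) + 1 / 2) ^ 2 := by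
    rw [integral_mul_rpow_Ioo_prod_Ioo (hexp n), inv_pow, one_div]; ring_nf
  have hnorm (n : ℕ) : ∫ p in S, ‖(p.1 * p.2) ^ ((n : ℝ) - 1 / 2)‖ = 1 / ((n : ℝ) + 1 / 2) ^ 2 := by
    rw [← hint n]
    exact setIntegral_congr_fun hS fun p hp =>
      norm_of_nonneg (rpow_nonneg (mul_pos hp.1.1 hp.2.1).le _)
  calc ∫ p in S, 1 / ((1 - p.1 * p.2) * √(p.1 * p.2))
      = ∫ p in S, ∑' n : ℕ, (p.1 * p.2) ^ ((n : ℝ) - 1 / 2) := by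
        refine setIntegral_congr_fun hS fun p ⟨⟨hx₀, hx₁⟩, hy₀, hy₁⟩ => ?_
        rw [sqrt_eq_rpow]
        exact ((hasSum_rpow_nat_sub _ (mul_pos hx₀ hy₀) (by nlinarith)).tsum_eq).symm
    _ = ∑' n : ℕ, 1 / ((n : ℝ) + 1 / 2) ^ 2 := by
        rw [← integral_tsum_of_summable_integral_norm
          (fun n => integrableOn_mul_rpow_Ioo_prod_Ioo (hexp n))
          (hasSum_one_div_nat_add_half_sq.summable.congr fun n => (hnorm n).symm)]
        exact tsum_congr hint
    _ = π ^ 2 / 2 := hasSum_one_div_nat_add_half_sq.tsum_eq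
end

section
/- For k ≥ 2, the iterated integral over the simplex {1 > t₁ > t₂ > ... > t_k > 0} of (dt₁/t₁)···(dt_{k−1}/t_{k−1})·(dt_k/(1−t_k)) equals ζ(k). In particular for k = 3: ∫∫∫_{1>t₁>t₂>t₃>0} 1/(t₁ t₂ (1−t₃)) dt₁dt₂dt₃ = ζ(3). -/
/-!
Expanding `1 / (1 - t_k)` as a geometric series reduces the claim to the integrals of the
monomials `t₀⁻¹ ⋯ t_{k-1}⁻¹ t_k ^ m` over `{c > t₀ > ⋯ > t_k > 0}`, which equal
`c ^ (m + 1) / (m + 1) ^ (k + 1)`: integrating out `t₀ = x` leaves the same integral in one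
dimension fewer with `c = x`, and `∫₀^c x⁻¹ x ^ (m + 1) dx = c ^ (m + 1) / (m + 1)`.
Monotone convergence lets the series be integrated term by term.
-/

open MeasureTheory Real Set ENNReal

def orderedSimplex (k : ℕ) (c : ℝ) : Set (Fin (k + 1) → ℝ) :=
  {t | StrictAnti t ∧ 0 < t (Fin.last k) ∧ t 0 < c}

namespace orderedSimplex

variable {k : ℕ} {c : ℝ}

lemma apply_mem_Ioo {t : Fin (k + 1) → ℝ} (ht : t ∈ orderedSimplex k c) (i : Fin (k + 1)) :
    t i ∈ Ioo 0 c :=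
  ⟨ht.2.1.trans_le (ht.1.antitone (Fin.le_last i)),
    (ht.1.antitone (Fin.zero_le i)).trans_lt ht.2.2⟩

lemma cons_mem_iff {x : ℝ} {y : Fin (k + 1) → ℝ} :
    Fin.cons x y ∈ orderedSimplex (k + 1) c ↔
      x ∈ Ioo 0 c ∧ y ∈ orderedSimplex k x := by
  have hanti : StrictAnti (Fin.cons x y : Fin (k + 2) → ℝ) ↔ y 0 < x ∧ StrictAnti y :=
    strictAnti_vecCons
  simp only [orderedSimplex, mem_ofPred_eq, hanti, ← Fin.succ_last, Fin.cons_succ, Fin.cons_zero]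
  constructor
  · rintro ⟨⟨hy0, hy⟩, hlast, hx⟩
    exact ⟨⟨hlast.trans_le (hy.antitone (Fin.zero_le _)) |>.trans hy0, hx⟩, hy, hlast, hy0⟩
  · rintro ⟨⟨-, hx⟩, hy, hlast, hy0⟩
    exact ⟨⟨hy0, hy⟩, hlast, hx⟩

lemma measurableSet (k : ℕ) (c : ℝ) : MeasurableSet (orderedSimplex k c) := by
  simp only [orderedSimplex, Fin.strictAnti_iff_succ_lt, ofPred_and, ofPred_forall]
  measurability

lemma setLIntegral_zero (f : (Fin 1 → ℝ) → ℝ≥0∞) :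
    ∫⁻ t in orderedSimplex 0 c, f t = ∫⁻ x in Ioo 0 c, f (fun _ ↦ x) := by
  have he := volume_preserving_funUnique (Fin 1) ℝ
  rw [← he.setLIntegral_comp_preimage_emb (MeasurableEquiv.measurableEmbedding _)]
  have hpre : MeasurableEquiv.funUnique (Fin 1) ℝ ⁻¹' Ioo 0 c = orderedSimplex 0 c := by
    ext t
    simp [orderedSimplex, Subsingleton.strictAnti]
  rw [hpre]
  exact lintegral_congr fun t ↦ congrArg f (funext fun i ↦ congrArg t (Fin.eq_zero i))

lemma setLIntegral_succ {f : (Fin (k + 2) → ℝ) → ℝ≥0∞} (hf : Measurable f) :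
    ∫⁻ t in orderedSimplex (k + 1) c, f t =
      ∫⁻ x in Ioo 0 c, ∫⁻ y in orderedSimplex k x, f (Fin.cons x y) := by
  have he := (volume_preserving_piFinSuccAbove (fun _ : Fin (k + 2) ↦ ℝ) 0).symm
  have hmeas : Measurable fun p : ℝ × (Fin (k + 1) → ℝ) ↦
      (orderedSimplex (k + 1) c).indicator f
        ((MeasurableEquiv.piFinSuccAbove (fun _ ↦ ℝ) 0).symm p) :=
    (hf.indicator (measurableSet _ _)).comp (MeasurableEquiv.measurable _)
  rw [← lintegral_indicator (measurableSet _ _), ← lintegral_indicator measurableSet_Ioo,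
    ← he.lintegral_comp_emb (MeasurableEquiv.measurableEmbedding _), Measure.volume_eq_prod,
    lintegral_prod _ hmeas.aemeasurable]
  refine lintegral_congr fun x ↦ ?_
  have hcons (y : Fin (k + 1) → ℝ) :
      (MeasurableEquiv.piFinSuccAbove (fun _ ↦ ℝ) 0).symm (x, y) = Fin.cons x y :=
    Fin.insertNth_zero' x y
  simp only [hcons]
  by_cases hx : x ∈ Ioo 0 c
  · rw [indicator_of_mem hx, ← lintegral_indicator (measurableSet _ _)]
    refine lintegral_congr fun y ↦ ?_
    by_cases hy : y ∈ orderedSimplex k x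
    · rw [indicator_of_mem hy, indicator_of_mem (cons_mem_iff.2 ⟨hx, hy⟩)]
    · rw [indicator_of_notMem hy, indicator_of_notMem fun h ↦ hy (cons_mem_iff.1 h).2]
  · rw [indicator_of_notMem hx, ← lintegral_zero]
    refine lintegral_congr fun y ↦ indicator_of_notMem (fun h ↦ hx (cons_mem_iff.1 h).1) _

end orderedSimplex

noncomputable def simplexMonomial (k m : ℕ) (t : Fin (k + 1) → ℝ) : ℝ :=
  (∏ i : Fin k, 1 / t i.castSucc) * t (Fin.last k) ^ m

section simplexMonomial

variable {k m : ℕ}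

lemma simplexMonomial_cons (x : ℝ) (y : Fin (k + 1) → ℝ) :
    simplexMonomial (k + 1) m (Fin.cons x y) = 1 / x * simplexMonomial k m y := by
  simp only [simplexMonomial, Fin.prod_univ_succ, Fin.castSucc_zero, Fin.cons_zero,
    ← Fin.succ_castSucc, ← Fin.succ_last, Fin.cons_succ, mul_assoc]

lemma simplexMonomial_zero_const (x : ℝ) : simplexMonomial 0 m (fun _ ↦ x) = x ^ m := by
  simp [simplexMonomial]

lemma measurable_simplexMonomial : Measurable (simplexMonomial k m) := by
  unfold simplexMonomial
  fun_prop

lemma simplexMonomial_nonneg {c : ℝ} {t : Fin (k + 1) → ℝ} (ht : t ∈ orderedSimplex k c) :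
    0 ≤ simplexMonomial k m t :=
  have hpos := fun i ↦ (orderedSimplex.apply_mem_Ioo ht i).1.le
  mul_nonneg (Finset.prod_nonneg fun _ _ ↦ one_div_nonneg.2 (hpos _)) (pow_nonneg (hpos _) m)

lemma hasSum_simplexMonomial {t : Fin (k + 1) → ℝ} (ht : t ∈ orderedSimplex k 1) :
    HasSum (fun m ↦ simplexMonomial k m t)
      ((∏ i : Fin k, 1 / t i.castSucc) * (1 / (1 - t (Fin.last k)))) := by
  obtain ⟨hpos, hlt⟩ := orderedSimplex.apply_mem_Ioo ht (Fin.last k)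
  rw [one_div (1 - _)]
  exact (hasSum_geometric_of_lt_one hpos.le hlt).mul_left _

end simplexMonomial

lemma setLIntegral_Ioo_ofReal_pow (m : ℕ) {c : ℝ} (hc : 0 ≤ c) :
    ∫⁻ x in Ioo 0 c, ENNReal.ofReal (x ^ m) = ENNReal.ofReal (c ^ (m + 1) / (m + 1)) := by
  rw [← ofReal_integral_eq_lintegral_ofReal, integral_Ioc_eq_integral_Ioo.symm,
    ← intervalIntegral.integral_of_le hc, integral_pow, zero_pow m.succ_ne_zero, sub_zero]
  · exact (continuous_pow m).integrableOn_Icc.mono_set Ioo_subset_Icc_self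
  · filter_upwards [ae_restrict_mem measurableSet_Ioo] with x hx using pow_nonneg hx.1.le m

theorem setLIntegral_orderedSimplex_simplexMonomial (k m : ℕ) {c : ℝ} (hc : 0 ≤ c) :
    ∫⁻ t in orderedSimplex k c, ENNReal.ofReal (simplexMonomial k m t) =
      ENNReal.ofReal (c ^ (m + 1) / (m + 1) ^ (k + 1)) := by
  induction k generalizing c with
  | zero =>
    simp only [orderedSimplex.setLIntegral_zero, simplexMonomial_zero_const,
      setLIntegral_Ioo_ofReal_pow m hc, zero_add, pow_one]
  | succ k ih =>
    calc ∫⁻ t in orderedSimplex (k + 1) c, ENNReal.ofReal (simplexMonomial (k + 1) m t)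
        = ∫⁻ x in Ioo 0 c, ENNReal.ofReal (x ^ m) * ENNReal.ofReal (1 / (m + 1) ^ (k + 1)) := by
          rw [orderedSimplex.setLIntegral_succ measurable_simplexMonomial.ennreal_ofReal]
          refine setLIntegral_congr_fun measurableSet_Ioo fun x hx ↦ ?_
          simp only [simplexMonomial_cons, ENNReal.ofReal_mul (one_div_nonneg.2 hx.1.le)]
          rw [lintegral_const_mul _ measurable_simplexMonomial.ennreal_ofReal, ih hx.1.le,
            ← ENNReal.ofReal_mul (one_div_nonneg.2 hx.1.le),
            ← ENNReal.ofReal_mul (pow_nonneg hx.1.le m)]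
          congr 1
          field_simp [hx.1.ne']
          ring
      _ = ENNReal.ofReal (c ^ (m + 1) / (m + 1) ^ (k + 1 + 1)) := by
          rw [lintegral_mul_const _ (by fun_prop), setLIntegral_Ioo_ofReal_pow m hc,
            ← ENNReal.ofReal_mul (by positivity)]
          congr 1
          field_simp
          ring

theorem simplex_integral_eq_zeta (n : ℕ) :
    ∫ t in {t : Fin (n + 2) → ℝ | StrictAnti t ∧ 0 < t (Fin.last (n + 1)) ∧ t 0 < 1},
      ((∏ i : Fin (n + 1), 1 / t i.castSucc) * (1 / (1 - t (Fin.last (n + 1))))) =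
    ∑' m : ℕ, 1 / ((m : ℝ) + 1) ^ (n + 2) := by
  change ∫ t in orderedSimplex (n + 1) 1, _ = _
  have hS := orderedSimplex.measurableSet (n + 1) 1
  have hzeta : Summable fun m : ℕ ↦ 1 / ((m : ℝ) + 1) ^ (n + 2) := by
    simpa using (summable_nat_add_iff 1).2 (summable_one_div_nat_pow.2 (by omega : 1 < n + 2))
  have hnonneg : 0 ≤ᵐ[volume.restrict (orderedSimplex (n + 1) 1)]
      fun t ↦ (∏ i : Fin (n + 1), 1 / t i.castSucc) * (1 / (1 - t (Fin.last (n + 1)))) :=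
    (ae_restrict_mem hS).mono fun t ht ↦
      (hasSum_simplexMonomial ht).nonneg fun _ ↦ simplexMonomial_nonneg ht
  rw [integral_eq_lintegral_of_nonneg_ae hnonneg (by fun_prop),
    setLIntegral_congr_fun hS fun t ht ↦ by
      rw [← (hasSum_simplexMonomial ht).tsum_eq, ofReal_tsum_of_nonneg
        (fun _ ↦ simplexMonomial_nonneg ht) (hasSum_simplexMonomial ht).summable],
    lintegral_tsum fun _ ↦ measurable_simplexMonomial.ennreal_ofReal.aemeasurable]
  simp_rw [setLIntegral_orderedSimplex_simplexMonomial _ _ zero_le_one, one_pow]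
  rw [← ofReal_tsum_of_nonneg (fun _ ↦ by positivity) hzeta,
    toReal_ofReal (tsum_nonneg fun _ ↦ by positivity)]
end
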